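/- arXiv:1609.09272 — 2 statements merged into one kernel-verified Lean document; each statement's English description precedes it below -/
import Mathlib

section
/- Suppose c = (c_0, …, c_n) ∈ 𝔠₊(N) and P ∈ 𝔓₊(N). Identify each Q ∈ 𝔓₊(N) with its coefficient vector q = (q_0, …, q_n) ∈ ℝ^{n+1}. Then the dual functional 𝕁_P(Q) := c_0 q_0 + 2 Σ_{k=1}^n c_k q_k − (1/2N) Σ_{j=−N+1}^N P(ζ_j) log Q(ζ_j) is strictly convex on the open convex cone 𝔓₊(N) and attains a unique minimum at some Q̂ ∈ 𝔓₊(N); moreover the minimizer Q̂ satisfies the moment conditions (1/2N) Σ_{j=−N+1}^N ζ_j^k P(ζ_j)/Q̂(ζ_j) = c_k for k = 0, 1, …, n. -/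
/-
Evaluation on the grid identifies `𝔓₊(N)` with an open convex cone on which `q ↦ (q(ζ_j))_j` is
injective (discrete Fourier inversion, as `n < N`), so `𝕁_P`, a linear form minus a positive
combination of the strictly concave functions `log q(ζ_j)`, is strictly convex. Since `c ∈ 𝔠₊(N)`,
`⟨c, q⟩ ≥ ε ‖q‖` on the closed cone, which beats the logarithmic growth of the other term: sublevel
sets of `𝕁_P` are bounded, and on them every `log q(ζ_j)` is bounded below, so they stay away from
the boundary of the cone. Hence they are compact and a minimizer `Q̂` exists. At the interior point
`Q̂` the derivative of `𝕁_P` along the `k`-th coordinate vanishes, which is the real part of the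
`k`-th moment condition; the imaginary part vanishes because `P/Q̂` is even on the grid.
-/

open Finset Complex Matrix

noncomputable section

/-- The point `ζ_j = exp(iπ j / N)` of the discrete unit circle `𝕋_{2N}`. -/
def zeta (N : ℕ) (j : ℤ) : ℂ := Complex.exp (Real.pi * Complex.I * j / N)

/-- The index set `j = -N+1, …, N`. -/
def Idx (N : ℕ) : Finset ℤ := Finset.Icc (-(N : ℤ) + 1) (N : ℤ)

/-- The symmetric pseudo-polynomial `Σ_{k=-n}^n p_{|k|} ζ^{-k}`. -/
def ppC {n : ℕ} (p : Fin (n + 1) → ℝ) (z : ℂ) : ℂ :=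
  ∑ k : Fin (n + 1), (p k : ℂ) * (z ^ (k.val : ℤ) + z ^ (-(k.val : ℤ))) - (p 0 : ℂ)

/-- Membership in the cone `𝔓₊(N)`: positivity on the discrete unit circle. -/
def memPplus (N : ℕ) {n : ℕ} (p : Fin (n + 1) → ℝ) : Prop :=
  ∀ j ∈ Idx N, 0 < (ppC p (zeta N j)).re

/-- The pairing `⟨c, p⟩ = Σ_{k=-n}^n c_{|k|} p_{|k|} = c_0 p_0 + 2 Σ_{k=1}^n c_k p_k`. -/
def pairCP {n : ℕ} (c p : Fin (n + 1) → ℝ) : ℝ :=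
  2 * ∑ k : Fin (n + 1), c k * p k - c 0 * p 0

/-- Membership in the dual cone `𝔠₊(N)`. -/
def memCplus (N : ℕ) {n : ℕ} (c : Fin (n + 1) → ℝ) : Prop :=
  ∀ p : Fin (n + 1) → ℝ, p ≠ 0 →
    (∀ j ∈ Idx N, 0 ≤ (ppC p (zeta N j)).re) → 0 < pairCP c p

/-- The dual functional
`𝕁_P(Q) = c_0 q_0 + 2 Σ_{k=1}^n c_k q_k − (1/2N) Σ_j P(ζ_j) log Q(ζ_j)`. -/
def Jdual (N : ℕ) {n : ℕ} (c P q : Fin (n + 1) → ℝ) : ℝ :=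
  pairCP c q -
    (∑ j ∈ Idx N, (ppC P (zeta N j)).re * Real.log ((ppC q (zeta N j)).re)) / (2 * N)

/-- The moment conditions `(1/2N) Σ_j ζ_j^k P(ζ_j)/Q(ζ_j) = c_k`, `k = 0, …, n`. -/
def momentConds (N : ℕ) {n : ℕ} (P Q c : Fin (n + 1) → ℝ) : Prop :=
  ∀ k : Fin (n + 1),
    (∑ j ∈ Idx N, zeta N j ^ (k.val : ℤ) *
        (((ppC P (zeta N j)).re / (ppC Q (zeta N j)).re : ℝ) : ℂ)) / (2 * N) = (c k : ℂ)

lemma zeta_eq_zpow (N : ℕ) (j : ℤ) : zeta N j = zeta N 1 ^ j := by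
  rw [zeta, zeta, ← Complex.exp_int_mul]
  push_cast
  ring_nf

lemma zeta_zpow_comm (N : ℕ) (j d : ℤ) : zeta N j ^ d = zeta N d ^ j := by
  rw [zeta_eq_zpow N j, zeta_eq_zpow N d, ← _root_.zpow_mul, ← _root_.zpow_mul, mul_comm]

lemma isPrimitiveRoot_zeta_one {N : ℕ} (hN : N ≠ 0) : IsPrimitiveRoot (zeta N 1) (2 * N) := by
  convert Complex.isPrimitiveRoot_exp (2 * N) (by positivity) using 1
  rw [zeta]
  push_cast
  field_simp

lemma card_Idx (N : ℕ) : #(Idx N) = 2 * N := by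
  simp only [Idx, Int.card_Icc]
  omega

lemma sum_Idx_eq_sum_range {M : Type*} [AddCommMonoid M] (N : ℕ) (f : ℤ → M) :
    ∑ j ∈ Idx N, f j = ∑ i ∈ range (2 * N), f (i + 1 - N) := by
  refine Finset.sum_nbij' (fun j => (j + N - 1).toNat) (fun i => (i : ℤ) + 1 - N) ?_ ?_ ?_ ?_ ?_
  all_goals intro x hx
  all_goals simp only [Idx, mem_Icc, mem_range] at hx ⊢
  all_goals first | omega | (congr 1; omega)

lemma sum_Idx_zpow_eq_zero {K : Type*} [Field K] {N : ℕ} {x : K} (hx : x ^ (2 * N) = 1)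
    (hx1 : x ≠ 1) : ∑ j ∈ Idx N, x ^ j = 0 := by
  obtain rfl | hN := eq_or_ne N 0
  · simp [Idx]
  have hx0 : x ≠ 0 := by rintro rfl; simp [hN] at hx
  have hshift (i : ℕ) : x ^ ((i : ℤ) + 1 - N) = x ^ (1 - (N : ℤ)) * x ^ i := by
    rw [← zpow_natCast, ← zpow_add₀ hx0]; ring_nf
  simp_rw [sum_Idx_eq_sum_range, hshift, ← Finset.mul_sum, geom_sum_eq hx1, hx, sub_self,
    zero_div, mul_zero]

lemma sum_Idx_zeta_zpow {N : ℕ} (hN : N ≠ 0) {d : ℤ} (hd : |d| < 2 * N) :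
    ∑ j ∈ Idx N, zeta N j ^ d = if d = 0 then (2 * N : ℂ) else 0 := by
  split_ifs with hd0
  · simp [hd0, card_Idx]
  · simp_rw [zeta_zpow_comm N _ d]
    have hprim := isPrimitiveRoot_zeta_one hN
    refine sum_Idx_zpow_eq_zero ?_ ?_
    · rw [zeta_eq_zpow, ← zpow_natCast, ← _root_.zpow_mul, mul_comm, _root_.zpow_mul,
        zpow_natCast, hprim.pow_eq_one, _root_.one_zpow]
    · rw [zeta_eq_zpow, Ne, hprim.zpow_eq_one_iff_dvd]
      exact fun h => hd0 (Int.eq_zero_of_abs_lt_dvd h (by exact_mod_cast hd))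

def cosVec (N : ℕ) {n : ℕ} (j : ℤ) : Fin (n + 1) → ℝ := fun k => Real.cos (Real.pi * j * k / N)

/-- The value `q(ζ_j)`, which is real because `ζ_j ^ k + ζ_j ^ (-k) = 2 cos (π j k / N)`
(see `ppC_zeta`). -/
def ppAt (N : ℕ) {n : ℕ} (q : Fin (n + 1) → ℝ) (j : ℤ) : ℝ := pairCP (cosVec N j) q

section pairing

variable {n : ℕ}

lemma pairCP_add_right (c p q : Fin (n + 1) → ℝ) :
    pairCP c (p + q) = pairCP c p + pairCP c q := by
  simp only [pairCP, Pi.add_apply, mul_add, sum_add_distrib]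
  ring

lemma pairCP_smul_right (c p : Fin (n + 1) → ℝ) (a : ℝ) :
    pairCP c (a • p) = a * pairCP c p := by
  simp only [pairCP, Pi.smul_apply, smul_eq_mul, mul_left_comm _ a, ← mul_sum]
  ring

lemma isLinearMap_pairCP (c : Fin (n + 1) → ℝ) : IsLinearMap ℝ (pairCP c) :=
  ⟨pairCP_add_right c, fun a p => pairCP_smul_right c p a⟩

lemma pairCP_single_right (c : Fin (n + 1) → ℝ) (k : Fin (n + 1)) :
    pairCP c (Pi.single k 1) = (if k = 0 then 1 else 2) * c k := by
  simp only [pairCP, Pi.single_apply, mul_ite, mul_one, mul_zero, sum_ite_eq', mem_univ, if_true]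
  rcases eq_or_ne k 0 with rfl | hk
  · simp only [if_true]
    ring
  · simp only [if_neg hk, if_neg hk.symm, sub_zero]

lemma continuous_pairCP_right (c : Fin (n + 1) → ℝ) : Continuous (pairCP c) := by
  unfold pairCP
  fun_prop

lemma abs_pairCP_le (c p : Fin (n + 1) → ℝ) : |pairCP c p| ≤ 3 * (n + 1) * ‖c‖ * ‖p‖ := by
  have hterm (k : Fin (n + 1)) : |c k * p k| ≤ ‖c‖ * ‖p‖ := by
    rw [abs_mul, ← Real.norm_eq_abs, ← Real.norm_eq_abs]
    exact mul_le_mul (norm_le_pi_norm c k) (norm_le_pi_norm p k) (norm_nonneg _) (norm_nonneg _)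
  have hsum : |∑ k, c k * p k| ≤ (n + 1) * (‖c‖ * ‖p‖) := by
    refine (abs_sum_le_sum_abs _ _).trans ?_
    simpa using sum_le_sum fun k (_ : k ∈ univ) => hterm k
  have : 0 ≤ n * (‖c‖ * ‖p‖) := by positivity
  calc |pairCP c p| ≤ 2 * |∑ k, c k * p k| + |c 0 * p 0| := by
        unfold pairCP
        simpa [abs_mul] using abs_sub (2 * ∑ k, c k * p k) (c 0 * p 0)
    _ ≤ 3 * (n + 1) * ‖c‖ * ‖p‖ := by nlinarith [hterm 0]

end pairing

lemma norm_cosVec_le (N : ℕ) {n : ℕ} (j : ℤ) : ‖(cosVec N j : Fin (n + 1) → ℝ)‖ ≤ 1 :=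
  pi_norm_le_iff_of_nonneg zero_le_one |>.2 fun k => by
    simpa [cosVec] using Real.abs_cos_le_one _

lemma zeta_zpow (N : ℕ) (j m : ℤ) :
    zeta N j ^ m = Complex.exp ((Real.pi * j * m / N : ℝ) * Complex.I) := by
  rw [zeta, ← Complex.exp_int_mul]
  push_cast
  ring_nf

lemma zeta_zpow_add_zpow_neg (N : ℕ) (j m : ℤ) :
    zeta N j ^ m + zeta N j ^ (-m) = ((2 * Real.cos (Real.pi * j * m / N) : ℝ) : ℂ) := by
  rw [zeta_zpow, zeta_zpow]
  push_cast
  rw [Complex.two_cos]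
  ring_nf

lemma ppC_zeta (N : ℕ) {n : ℕ} (q : Fin (n + 1) → ℝ) (j : ℤ) :
    ppC q (zeta N j) = ppAt N q j := by
  simp only [ppC, zeta_zpow_add_zpow_neg, ppAt, pairCP, cosVec, Fin.val_zero, Nat.cast_zero,
    mul_zero, zero_div, Real.cos_zero, one_mul]
  push_cast
  rw [mul_sum]
  exact congrArg (· - _) (sum_congr rfl fun _ _ => by ring)

lemma sum_zeta_zpow_mul_ppC {N n : ℕ} (hNn : n < N) (q : Fin (n + 1) → ℝ) (k : Fin (n + 1)) :
    ∑ j ∈ Idx N, zeta N j ^ (k : ℤ) * ppC q (zeta N j) = 2 * N * q k := by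
  have hN : N ≠ 0 := by omega
  have expand (j : ℤ) : zeta N j ^ (k : ℤ) * ppC q (zeta N j) =
      ∑ m : Fin (n + 1), (q m : ℂ) * (zeta N j ^ ((k : ℤ) + m) + zeta N j ^ ((k : ℤ) - m))
        - q 0 * zeta N j ^ (k : ℤ) := by
    have hz : zeta N j ≠ 0 := Complex.exp_ne_zero _
    simp only [ppC, mul_sub, mul_sum, zpow_add₀ hz, zpow_sub₀ hz, _root_.zpow_neg, div_eq_mul_inv]
    congr 1
    · exact sum_congr rfl fun _ _ => by ring
    · ring
  have hsum (d : ℤ) (hd : -(2 * N : ℤ) < d ∧ d < 2 * N) := sum_Idx_zeta_zpow hN (abs_lt.2 hd)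
  have hplus : ∑ m : Fin (n + 1), (q m : ℂ) * ∑ j ∈ Idx N, zeta N j ^ ((k : ℤ) + m) =
      q 0 * ∑ j ∈ Idx N, zeta N j ^ (k : ℤ) := by
    rw [Fintype.sum_eq_single 0 fun m hm => ?_]
    · simp
    · rw [hsum _ ⟨by omega, by omega⟩, if_neg (by have := Fin.pos_of_ne_zero hm; omega), mul_zero]
  have hminus : ∑ m : Fin (n + 1), (q m : ℂ) * ∑ j ∈ Idx N, zeta N j ^ ((k : ℤ) - m) =
      2 * N * q k := by
    rw [Fintype.sum_eq_single k fun m hm => ?_]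
    · rw [sub_self, hsum 0 ⟨by omega, by omega⟩, if_pos rfl, mul_comm]
    · rw [hsum _ ⟨by omega, by omega⟩, if_neg (by have := Fin.val_ne_of_ne hm; omega), mul_zero]
  simp_rw [expand, sum_sub_distrib, ← mul_sum]
  rw [sum_comm]
  simp_rw [← mul_sum, sum_add_distrib, mul_add, sum_add_distrib, hplus, hminus]
  ring

lemma ppC_re (N : ℕ) {n : ℕ} (q : Fin (n + 1) → ℝ) (j : ℤ) :
    (ppC q (zeta N j)).re = ppAt N q j := by
  rw [ppC_zeta, Complex.ofReal_re]

lemma memPplus_iff {N n : ℕ} {q : Fin (n + 1) → ℝ} :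
    memPplus N q ↔ ∀ j ∈ Idx N, 0 < ppAt N q j := by
  simp only [memPplus, ppC_re]

lemma ppAt_single (N : ℕ) {n : ℕ} (k : Fin (n + 1)) (j : ℤ) :
    ppAt N (Pi.single k 1) j = (if k = 0 then 1 else 2) * Real.cos (Real.pi * j * k / N) :=
  pairCP_single_right _ k

lemma ppAt_single_zero (N : ℕ) {n : ℕ} (j : ℤ) : ppAt N (Pi.single (0 : Fin (n + 1)) 1) j = 1 := by
  simp [ppAt_single]

lemma continuous_ppAt (N : ℕ) {n : ℕ} (j : ℤ) :
    Continuous fun q : Fin (n + 1) → ℝ => ppAt N q j :=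
  continuous_pairCP_right _

lemma abs_ppAt_le (N : ℕ) {n : ℕ} (q : Fin (n + 1) → ℝ) (j : ℤ) :
    |ppAt N q j| ≤ 3 * (n + 1) * ‖q‖ :=
  calc |ppAt N q j| ≤ 3 * (n + 1) * ‖(cosVec N j : Fin (n + 1) → ℝ)‖ * ‖q‖ := abs_pairCP_le _ _
    _ ≤ 3 * (n + 1) * 1 * ‖q‖ := by gcongr; exact norm_cosVec_le N j
    _ = 3 * (n + 1) * ‖q‖ := by ring

lemma ppAt_neg (N : ℕ) {n : ℕ} (q : Fin (n + 1) → ℝ) (j : ℤ) : ppAt N q (-j) = ppAt N q j := by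
  unfold ppAt cosVec
  congr 1
  funext k
  rw [← Real.cos_neg]
  push_cast
  ring_nf

lemma eq_of_forall_ppAt_eq {N n : ℕ} (hNn : n < N) {q q' : Fin (n + 1) → ℝ}
    (h : ∀ j ∈ Idx N, ppAt N q j = ppAt N q' j) : q = q' := by
  funext k
  have hq := sum_zeta_zpow_mul_ppC hNn q k
  rw [sum_congr rfl fun j hj => by rw [ppC_zeta, h j hj, ← ppC_zeta],
    sum_zeta_zpow_mul_ppC hNn q' k] at hq
  have h2N : (2 * N : ℂ) ≠ 0 := by norm_cast; omega
  exact_mod_cast (mul_left_cancel₀ h2N hq).symm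

lemma convex_Pplus (N n : ℕ) : Convex ℝ {q : Fin (n + 1) → ℝ | memPplus N q} := by
  simp only [memPplus_iff, Set.ofPred_forall]
  exact convex_iInter₂ fun j _ => convex_halfSpace_gt (isLinearMap_pairCP (cosVec N j)) 0

lemma isOpen_Pplus (N n : ℕ) : IsOpen {q : Fin (n + 1) → ℝ | memPplus N q} := by
  simp only [memPplus_iff, Set.ofPred_forall]
  exact isOpen_biInter_finset fun j _ => isOpen_lt continuous_const (continuous_ppAt N j)

def logTerm (N : ℕ) {n : ℕ} (P q : Fin (n + 1) → ℝ) : ℝ :=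
  (∑ j ∈ Idx N, ppAt N P j * Real.log (ppAt N q j)) / (2 * N)

lemma Jdual_eq (N : ℕ) {n : ℕ} (c P q : Fin (n + 1) → ℝ) :
    Jdual N c P q = pairCP c q - logTerm N P q := by
  simp only [Jdual, logTerm, ppC_re]

lemma strictConcaveOn_logTerm {N n : ℕ} (hNn : n < N) {P : Fin (n + 1) → ℝ} (hP : memPplus N P) :
    StrictConcaveOn ℝ {q | memPplus N q} (logTerm N P) := by
  refine ⟨convex_Pplus N n, fun q hq q' hq' hne a b ha hb hab => ?_⟩
  rw [Set.mem_ofPred_eq, memPplus_iff] at hq hq'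
  rw [memPplus_iff] at hP
  obtain ⟨j₀, hj₀, hne₀⟩ : ∃ j ∈ Idx N, ppAt N q j ≠ ppAt N q' j := by
    by_contra! h
    exact hne (eq_of_forall_ppAt_eq hNn h)
  have hlog (j : ℤ) (hj : j ∈ Idx N) := strictConcaveOn_log_Ioi.concaveOn.2
    (Set.mem_Ioi.2 (hq j hj)) (Set.mem_Ioi.2 (hq' j hj)) ha.le hb.le hab
  have hlog₀ := strictConcaveOn_log_Ioi.2
    (Set.mem_Ioi.2 (hq j₀ hj₀)) (Set.mem_Ioi.2 (hq' j₀ hj₀)) hne₀ ha hb hab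
  have hsum : ∑ j ∈ Idx N, ppAt N P j * (a * Real.log (ppAt N q j) + b * Real.log (ppAt N q' j)) <
      ∑ j ∈ Idx N, ppAt N P j * Real.log (ppAt N (a • q + b • q') j) := by
    simp only [ppAt, pairCP_add_right, pairCP_smul_right] at hlog hlog₀ ⊢
    refine sum_lt_sum (fun j hj => ?_) ⟨j₀, hj₀, ?_⟩
    · exact mul_le_mul_of_nonneg_left (hlog j hj) (hP j hj).le
    · exact mul_lt_mul_of_pos_left hlog₀ (hP j₀ hj₀)
  have h2N : (0 : ℝ) < 2 * N := by norm_cast; omega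
  simp only [logTerm, smul_eq_mul, ← mul_div_assoc, ← add_div, mul_sum, ← sum_add_distrib]
  refine div_lt_div_of_pos_right (lt_of_eq_of_lt (sum_congr rfl fun j _ => ?_) hsum) h2N
  ring

lemma strictConvexOn_Jdual {N n : ℕ} (hNn : n < N) (c : Fin (n + 1) → ℝ)
    {P : Fin (n + 1) → ℝ} (hP : memPplus N P) :
    StrictConvexOn ℝ {q | memPplus N q} (Jdual N c P) := by
  have hlin : ConvexOn ℝ {q | memPplus N q} (pairCP c) :=
    ((isLinearMap_pairCP c).mk' _).convexOn (convex_Pplus N n)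
  exact (hlin.sub_strictConcaveOn (strictConcaveOn_logTerm hNn hP)).congr
    fun q _ => (Jdual_eq N c P q).symm

open Filter

lemma isClosed_setOf_forall_le_ppAt (N : ℕ) {n : ℕ} (δ : ℝ) :
    IsClosed {q : Fin (n + 1) → ℝ | ∀ j ∈ Idx N, δ ≤ ppAt N q j} := by
  simp only [Set.ofPred_forall]
  exact isClosed_biInter fun j _ => isClosed_le continuous_const (continuous_ppAt N j)

lemma exists_pos_mul_norm_le_pairCP {N n : ℕ} {c : Fin (n + 1) → ℝ} (hc : memCplus N c) :
    ∃ ε > 0, ∀ q, (∀ j ∈ Idx N, 0 ≤ ppAt N q j) → ε * ‖q‖ ≤ pairCP c q := by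
  set K := Metric.sphere (0 : Fin (n + 1) → ℝ) 1 ∩ {q | ∀ j ∈ Idx N, 0 ≤ ppAt N q j}
  have hK : IsCompact K := (isCompact_sphere _ _).inter_right (isClosed_setOf_forall_le_ppAt N 0)
  have hKne : K.Nonempty := ⟨Pi.single 0 1, by simp [K, Pi.norm_single, ppAt_single_zero]⟩
  obtain ⟨z, ⟨hz1, hz⟩, hzmin⟩ := hK.exists_isMinOn hKne (continuous_pairCP_right c).continuousOn
  have hz0 : z ≠ 0 := ne_zero_of_mem_unit_sphere ⟨z, hz1⟩
  refine ⟨pairCP c z, hc z hz0 fun j hj => by rw [ppC_re]; exact hz j hj, fun q hq => ?_⟩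
  obtain rfl | hq0 := eq_or_ne q 0
  · simp [pairCP]
  have hqK : ‖q‖⁻¹ • q ∈ K := by
    refine ⟨by simp [norm_smul, hq0], fun j hj => ?_⟩
    simp only [ppAt, pairCP_smul_right] at hq ⊢
    exact mul_nonneg (by positivity) (hq j hj)
  have := hzmin hqK
  rwa [Set.mem_ofPred_eq, pairCP_smul_right, inv_mul_eq_div, le_div_iff₀ (norm_pos_iff.2 hq0)]
    at this

lemma tendsto_mul_sub_mul_log_atTop {ε : ℝ} (hε : 0 < ε) (A : ℝ) {C : ℝ} (hC : 0 < C) :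
    Tendsto (fun r : ℝ => ε * r - A * Real.log (C * r)) atTop atTop := by
  have hlog := (Real.isLittleO_log_id_atTop.const_mul_left A).bound (half_pos hε)
  refine tendsto_atTop_mono' _ ?_ (tendsto_atTop_add_const_right _ (-(A * Real.log C))
    (tendsto_id.const_mul_atTop (half_pos hε)))
  filter_upwards [hlog, eventually_gt_atTop 0] with r hr hr0
  rw [Real.log_mul hC.ne' hr0.ne']
  simp only [Real.norm_eq_abs, id_eq, abs_of_pos hr0] at hr ⊢
  linarith [le_abs_self (A * Real.log r)]

lemma log_ppAt_le {N n : ℕ} {q : Fin (n + 1) → ℝ} (hq : memPplus N q) {j : ℤ} (hj : j ∈ Idx N)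
    {R : ℝ} (hR : ‖q‖ ≤ R) : Real.log (ppAt N q j) ≤ Real.log (3 * (n + 1) * R) :=
  Real.log_le_log (memPplus_iff.1 hq j hj) <| (le_abs_self _).trans <|
    (abs_ppAt_le N q j).trans (by gcongr)

lemma exists_norm_le_of_Jdual_le {N n : ℕ} {c P : Fin (n + 1) → ℝ}
    (hc : memCplus N c) (hP : memPplus N P) (m : ℝ) :
    ∃ R, ∀ q, memPplus N q → Jdual N c P q ≤ m → ‖q‖ ≤ R := by
  obtain ⟨ε, hε, hεc⟩ := exists_pos_mul_norm_le_pairCP hc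
  set A := (∑ j ∈ Idx N, ppAt N P j) / (2 * N)
  have hlower (q) (hq : memPplus N q) :
      ε * ‖q‖ - A * Real.log (3 * (n + 1) * ‖q‖) ≤ Jdual N c P q := by
    have hlog : logTerm N P q ≤ A * Real.log (3 * (n + 1) * ‖q‖) := by
      rw [logTerm, div_mul_eq_mul_div, sum_mul]
      refine div_le_div_of_nonneg_right (sum_le_sum fun j hj => ?_) (by positivity)
      exact mul_le_mul_of_nonneg_left (log_ppAt_le hq hj le_rfl) (memPplus_iff.1 hP j hj).le
    rw [Jdual_eq]
    linarith [hεc q fun j hj => (memPplus_iff.1 hq j hj).le]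
  have hC : (0 : ℝ) < 3 * (n + 1) := by positivity
  obtain ⟨R, hR⟩ :=
    eventually_atTop.1 ((tendsto_mul_sub_mul_log_atTop hε A hC).eventually_gt_atTop m)
  refine ⟨R, fun q hq hqm => ?_⟩
  by_contra! hRq
  linarith [hR _ hRq.le, hlower q hq]

lemma exists_pos_le_ppAt_of_Jdual_le {N n : ℕ} (hN : N ≠ 0) (c : Fin (n + 1) → ℝ)
    {P : Fin (n + 1) → ℝ} (hP : memPplus N P) (m R : ℝ) :
    ∃ δ > 0, ∀ q, memPplus N q → Jdual N c P q ≤ m → ‖q‖ ≤ R → ∀ j ∈ Idx N, δ ≤ ppAt N q j := by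
  rw [memPplus_iff] at hP
  set M := Real.log (3 * (n + 1) * R)
  set K := (∑ j ∈ Idx N, ppAt N P j) * M + 2 * N * (3 * (n + 1) * ‖c‖ * R + m)
  have hIdx : (Idx N).Nonempty := ⟨N, by rw [Idx, mem_Icc]; omega⟩
  refine ⟨(Idx N).inf' hIdx fun j => Real.exp (M - K / ppAt N P j),
    (lt_inf'_iff hIdx).2 fun j _ => Real.exp_pos _, fun q hq hqm hqR j₀ hj₀ => ?_⟩
  have hM (j : ℤ) (hj : j ∈ Idx N) : Real.log (ppAt N q j) ≤ M := log_ppAt_le hq hj hqR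
  -- every `P_j (M - log q(ζ_j))` is nonnegative, and their sum is fixed by `⟨c, q⟩` and `𝕁_P(q)`
  have hsingle : ppAt N P j₀ * (M - Real.log (ppAt N q j₀)) ≤ K := by
    have hpair : -(3 * (n + 1) * ‖c‖ * R) ≤ pairCP c q :=
      neg_le_of_abs_le ((abs_pairCP_le c q).trans (by gcongr))
    have hJ : ∑ j ∈ Idx N, ppAt N P j * Real.log (ppAt N q j) =
        2 * N * (pairCP c q - Jdual N c P q) := by
      rw [Jdual_eq, logTerm]
      field_simp
      ring
    calc ppAt N P j₀ * (M - Real.log (ppAt N q j₀))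
        ≤ ∑ j ∈ Idx N, ppAt N P j * (M - Real.log (ppAt N q j)) :=
          single_le_sum (f := fun j => ppAt N P j * (M - Real.log (ppAt N q j)))
            (fun j hj => mul_nonneg (hP j hj).le (sub_nonneg.2 (hM j hj))) hj₀
      _ = (∑ j ∈ Idx N, ppAt N P j) * M - 2 * N * (pairCP c q - Jdual N c P q) := by
          rw [← hJ, sum_mul, ← sum_sub_distrib]
          exact sum_congr rfl fun j _ => by ring
      _ ≤ K := by
          have : (0 : ℝ) ≤ 2 * N := by positivity
          nlinarith
  have hP₀ := hP j₀ hj₀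
  calc (Idx N).inf' hIdx (fun j => Real.exp (M - K / ppAt N P j))
      ≤ Real.exp (M - K / ppAt N P j₀) := inf'_le _ hj₀
    _ ≤ Real.exp (Real.log (ppAt N q j₀)) := by
        gcongr
        rw [sub_le_comm, le_div_iff₀ hP₀]
        linarith
    _ = ppAt N q j₀ := Real.exp_log (memPplus_iff.1 hq j₀ hj₀)

lemma exists_isMinOn_of_isCompact_sublevel {X α : Type*} [TopologicalSpace X] [LinearOrder α]
    [TopologicalSpace α] [ClosedIicTopology α] {f : X → α} {S K : Set X} (hK : IsCompact K)
    (hKS : K ⊆ S) (hf : ContinuousOn f K) {x₀ : X} (hx₀ : x₀ ∈ S)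
    (hsub : ∀ x ∈ S, f x ≤ f x₀ → x ∈ K) : ∃ x ∈ S, IsMinOn f S x := by
  obtain ⟨x, hxK, hxmin⟩ := hK.exists_isMinOn ⟨x₀, hsub x₀ hx₀ le_rfl⟩ hf
  refine ⟨x, hKS hxK, fun y hy => ?_⟩
  rcases le_total (f y) (f x₀) with hy₀ | hy₀
  · exact hxmin (hsub y hy hy₀)
  · exact (hxmin (hsub x₀ hx₀ le_rfl)).trans hy₀

lemma continuousOn_logTerm (N : ℕ) {n : ℕ} (P : Fin (n + 1) → ℝ) :
    ContinuousOn (logTerm N P) {q | memPplus N q} := by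
  refine ContinuousOn.div_const (continuousOn_finsetSum _ fun j hj => ?_) _
  refine continuousOn_const.mul ((continuous_ppAt N j).continuousOn.log fun q hq => ?_)
  exact (memPplus_iff.1 hq j hj).ne'

lemma exists_isMinOn_Jdual {N n : ℕ} (hN : N ≠ 0) {c P : Fin (n + 1) → ℝ} (hc : memCplus N c)
    (hP : memPplus N P) : ∃ Q ∈ {q | memPplus N q}, IsMinOn (Jdual N c P) {q | memPplus N q} Q := by
  set q₀ : Fin (n + 1) → ℝ := Pi.single 0 1
  have hq₀ : memPplus N q₀ := memPplus_iff.2 fun j _ => by simp [q₀, ppAt_single_zero]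
  obtain ⟨R, hR⟩ := exists_norm_le_of_Jdual_le hc hP (Jdual N c P q₀)
  obtain ⟨δ, hδ, hδq⟩ := exists_pos_le_ppAt_of_Jdual_le hN c hP (Jdual N c P q₀) R
  set K : Set (Fin (n + 1) → ℝ) := Metric.closedBall 0 R ∩ {q | ∀ j ∈ Idx N, δ ≤ ppAt N q j}
  have hKS : K ⊆ {q | memPplus N q} := fun q hq =>
    memPplus_iff.2 fun j hj => hδ.trans_le (hq.2 j hj)
  refine exists_isMinOn_of_isCompact_sublevel
    ((isCompact_closedBall _ _).inter_right (isClosed_setOf_forall_le_ppAt N δ)) hKS ?_ hq₀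
    fun q hq hqm => ⟨mem_closedBall_zero_iff.2 (hR q hq hqm), hδq q hq hqm (hR q hq hqm)⟩
  have hJ : ContinuousOn (fun q => pairCP c q - logTerm N P q) {q | memPplus N q} :=
    (continuous_pairCP_right c).continuousOn.sub (continuousOn_logTerm N P)
  exact (hJ.mono hKS).congr fun q _ => Jdual_eq N c P q

lemma hasDerivAt_Jdual_line {N n : ℕ} (c P : Fin (n + 1) → ℝ) {Q : Fin (n + 1) → ℝ}
    (hQ : memPplus N Q) (d : Fin (n + 1) → ℝ) :
    HasDerivAt (fun t : ℝ => Jdual N c P (Q + t • d))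
      (pairCP c d - (∑ j ∈ Idx N, ppAt N P j * ppAt N d j / ppAt N Q j) / (2 * N)) 0 := by
  have hline : (fun t : ℝ => Jdual N c P (Q + t • d)) = fun t => pairCP c Q + t * pairCP c d -
      (∑ j ∈ Idx N, ppAt N P j * Real.log (ppAt N Q j + t * ppAt N d j)) / (2 * N) := by
    funext t
    simp only [Jdual_eq, logTerm, ppAt, pairCP_add_right, pairCP_smul_right]
  rw [hline]
  refine ((hasDerivAt_mul_const _).const_add _).sub
    ((HasDerivAt.fun_sum fun j hj => ?_).div_const _)
  have hQj : ppAt N Q j + 0 * ppAt N d j ≠ 0 := by simpa using (memPplus_iff.1 hQ j hj).ne'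
  have h := (((hasDerivAt_mul_const (ppAt N d j)).const_add (ppAt N Q j)).log hQj).const_mul
    (ppAt N P j)
  rwa [zero_mul, add_zero, ← mul_div_assoc] at h

lemma pairCP_eq_of_isMinOn {N n : ℕ} {c P Q : Fin (n + 1) → ℝ} (hQ : memPplus N Q)
    (hmin : IsMinOn (Jdual N c P) {q | memPplus N q} Q) (d : Fin (n + 1) → ℝ) :
    pairCP c d = (∑ j ∈ Idx N, ppAt N P j * ppAt N d j / ppAt N Q j) / (2 * N) := by
  have hloc : IsLocalMin (fun t : ℝ => Jdual N c P (Q + t • d)) 0 := by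
    have : IsLocalMin (Jdual N c P) (Q + (0 : ℝ) • d) := by
      simpa using hmin.isLocalMin ((isOpen_Pplus N n).mem_nhds hQ)
    exact this.comp_continuous (g := fun t : ℝ => Q + t • d) (by fun_prop)
  exact sub_eq_zero.1 (hloc.hasDerivAt_eq_zero (hasDerivAt_Jdual_line c P hQ d))

lemma sum_Idx_sin_mul_eq_zero {N : ℕ} (hN : N ≠ 0) (k : ℕ) {r : ℤ → ℝ} (hr : r.Even) :
    ∑ j ∈ Idx N, Real.sin (Real.pi * j * k / N) * r j = 0 := by
  have hodd : Function.Odd fun j : ℤ => Real.sin (Real.pi * j * k / N) * r j := fun j => by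
    simp only [Int.cast_neg, hr j, mul_neg, neg_mul, neg_div, Real.sin_neg]
  have hsym : (Ico (-(N : ℤ) + 1) N).map (Equiv.neg ℤ).toEmbedding = Ico (-(N : ℤ) + 1) N := by
    ext j
    simp only [mem_map_equiv, Equiv.neg_symm, Equiv.neg_apply, mem_Ico]
    omega
  have hsinN : Real.sin (Real.pi * (N : ℤ) * k / N) = 0 := by
    rw [Int.cast_natCast, mul_div_right_comm, mul_div_assoc, div_self (by positivity), mul_one,
      mul_comm, Real.sin_nat_mul_pi]
  rw [Idx, sum_Icc_eq_sum_Ico_add _ (by omega), hodd.finsetSum_eq_zero hsym, hsinN]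
  simp

lemma momentConds_of_isMinOn {N n : ℕ} (hN : N ≠ 0) {c P Q : Fin (n + 1) → ℝ}
    (hQ : memPplus N Q) (hmin : IsMinOn (Jdual N c P) {q | memPplus N q} Q) :
    momentConds N P Q c := by
  intro k
  set r : ℤ → ℝ := fun j => ppAt N P j / ppAt N Q j
  have hr : r.Even := fun j => by simp only [r, ppAt_neg]
  have hcos : c k = (∑ j ∈ Idx N, Real.cos (Real.pi * j * k / N) * r j) / (2 * N) := by
    have h := pairCP_eq_of_isMinOn hQ hmin (Pi.single k 1)
    simp only [pairCP_single_right, ppAt_single] at h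
    have hw : (if k = 0 then (1 : ℝ) else 2) ≠ 0 := by split_ifs <;> norm_num
    refine mul_left_cancel₀ hw (h.trans ?_)
    rw [mul_div_assoc', mul_sum]
    exact congrArg (· / _) (sum_congr rfl fun j _ => by simp only [r]; ring)
  have hterm (j : ℤ) : zeta N j ^ (k : ℤ) * (r j : ℂ) =
      ((Real.cos (Real.pi * j * k / N) * r j : ℝ) : ℂ) +
        ((Real.sin (Real.pi * j * k / N) * r j : ℝ) : ℂ) * Complex.I := by
    rw [zeta_zpow, Complex.exp_mul_I, ← Complex.ofReal_cos, ← Complex.ofReal_sin]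
    push_cast
    ring
  simp only [ppC_re]
  rw [sum_congr rfl fun j _ => hterm j, sum_add_distrib, ← sum_mul, ← Complex.ofReal_sum,
    ← Complex.ofReal_sum, sum_Idx_sin_mul_eq_zero hN k hr, hcos]
  push_cast
  ring

theorem stmt1_general (N n : ℕ) (hNn : n < N)
    (c P : Fin (n + 1) → ℝ) (hc : memCplus N c) (hP : memPplus N P) :
    StrictConvexOn ℝ {q : Fin (n + 1) → ℝ | memPplus N q} (Jdual N c P) ∧
    ∃ Qhat : Fin (n + 1) → ℝ, memPplus N Qhat ∧
      (∀ q, memPplus N q → Jdual N c P Qhat ≤ Jdual N c P q) ∧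
      (∀ q, memPplus N q → (∀ q', memPplus N q' → Jdual N c P q ≤ Jdual N c P q') →
        q = Qhat) ∧
      momentConds N P Qhat c := by
  have hN : N ≠ 0 := by omega
  have hconvex := strictConvexOn_Jdual hNn c hP
  obtain ⟨Qhat, hQ, hmin⟩ := exists_isMinOn_Jdual hN hc hP
  refine ⟨hconvex, Qhat, hQ, fun q hq => hmin hq, fun q hq hqmin => ?_,
    momentConds_of_isMinOn hN hQ hmin⟩
  exact hconvex.eq_of_isMinOn (fun q' hq' => hqmin q' hq') hmin hq hQ

/-- the dual functional `𝕁_P` is strictly convex on `𝔓₊(N)`, attains a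
unique minimum there, and the minimizer satisfies the moment conditions. -/
theorem stmt1 (N n : ℕ) (hn : 1 ≤ n) (hNn : n < N)
    (c P : Fin (n + 1) → ℝ) (hc : memCplus N c) (hP : memPplus N P) :
    StrictConvexOn ℝ {q : Fin (n + 1) → ℝ | memPplus N q} (Jdual N c P) ∧
    ∃ Qhat : Fin (n + 1) → ℝ, memPplus N Qhat ∧
      (∀ q, memPplus N q → Jdual N c P Qhat ≤ Jdual N c P q) ∧
      (∀ q, memPplus N q → (∀ q', memPplus N q' → Jdual N c P q ≤ Jdual N c P q') →
        q = Qhat) ∧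
      momentConds N P Qhat c :=
  stmt1_general N n hNn c P hc hP

end
end

section
/- Suppose c = (c_0, …, c_n) ∈ 𝔠₊(N) and P ∈ 𝔓₊(N), and let Q̂ be the unique minimizer over 𝔓₊(N) of the dual functional 𝕁_P. Then among all functions Φ : 𝕋_{2N} → (0, ∞) with Φ(ζ^{−1}) = Φ(ζ) that satisfy the moment conditions (1/2N) Σ_{j=−N+1}^N ζ_j^k Φ(ζ_j) = c_k for k = 0, 1, …, n, the generalized entropy 𝕀_P(Φ) := (1/2N) Σ_{j=−N+1}^N P(ζ_j) log Φ(ζ_j) attains its maximum, and it does so uniquely at Φ = P/Q̂. -/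
open Finset Complex Matrix

noncomputable section

/-- The generalized entropy `𝕀_P(Φ) = (1/2N) Σ_j P(ζ_j) log Φ(ζ_j)`, where the function `Φ`
on `𝕋_{2N}` is represented through its values `Φ j = Φ(ζ_j)`, `j ∈ ℤ`. -/
def entropyP (N : ℕ) {n : ℕ} (P : Fin (n + 1) → ℝ) (Φ : ℤ → ℝ) : ℝ :=
  (∑ j ∈ Idx N, (ppC P (zeta N j)).re * Real.log (Φ j)) / (2 * N)

/-- The constraints on a candidate `Φ : 𝕋_{2N} → (0,∞)`: well-definedness on the discrete
circle (`2N`-periodicity), the symmetry `Φ(ζ⁻¹) = Φ(ζ)`, strict positivity, and the moment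
conditions `(1/2N) Σ_j ζ_j^k Φ(ζ_j) = c_k` for `k = 0, …, n`. -/
def feasibleΦ (N : ℕ) {n : ℕ} (c : Fin (n + 1) → ℝ) (Φ : ℤ → ℝ) : Prop :=
  (∀ j : ℤ, Φ (j + 2 * N) = Φ j) ∧ (∀ j : ℤ, Φ (-j) = Φ j) ∧ (∀ j : ℤ, 0 < Φ j) ∧
    ∀ k : Fin (n + 1),
      (∑ j ∈ Idx N, zeta N j ^ (k.val : ℤ) * ((Φ j : ℝ) : ℂ)) / (2 * N) = (c k : ℂ)


/-!
Since `Q̂` minimises `𝕁_P` on the open cone `𝔓₊(N)`, its derivative in every direction `d`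
vanishes: `⟨c, d⟩ = (1/2N) Σ_j (P/Q̂)(ζ_j) d(ζ_j)`. Testing with `d = e_k` shows that
`Φ̂ = P/Q̂` has the real moments `c_k`; its moments are real because `Φ̂` is even, so `Φ̂` is
feasible. For every feasible `Φ` the same pairing gives `Σ_j Φ(ζ_j) Q̂(ζ_j) = 2N⟨c, Q̂⟩ =
Σ_j P(ζ_j)`, and summing the pointwise inequality `P log Φ ≤ P log (P/Q̂) + (Φ Q̂ - P)`
(that is, `log x ≤ x - 1`, strict for `x ≠ 1`) yields `𝕀_P(Φ) ≤ 𝕀_P(Φ̂)`, with equality only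
if `Φ = Φ̂` on `𝕋_{2N}`.
-/

lemma zeta_neg (N : ℕ) (j : ℤ) : zeta N (-j) = (zeta N j)⁻¹ := by
  rw [zeta, zeta, ← Complex.exp_neg]
  push_cast
  ring_nf

lemma norm_zeta (N : ℕ) (j : ℤ) : ‖zeta N j‖ = 1 := by
  simp [zeta, Complex.norm_exp, Complex.div_re]

lemma zeta_periodic {N : ℕ} (hN : 0 < N) : Function.Periodic (zeta N) (2 * N) := by
  intro j
  have hN' : (N : ℂ) ≠ 0 := by exact_mod_cast hN.ne'
  rw [zeta, zeta, ← Complex.exp_periodic (Real.pi * I * j / N)]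
  congr 1
  push_cast
  field_simp

lemma exists_mem_Idx_eq {α : Type*} {N : ℕ} (hN : 0 < N) {f : ℤ → α}
    (hf : Function.Periodic f (2 * N)) (j : ℤ) : ∃ i ∈ Idx N, f j = f i := by
  obtain ⟨i, hi, hfi⟩ := hf.exists_mem_Ioc (by positivity) j (-N)
  refine ⟨i, ?_, hfi⟩
  simp only [Set.mem_Ioc] at hi
  simp only [Idx, Finset.mem_Icc]
  omega

lemma Function.Periodic.eq_of_eqOn_Idx {α : Type*} {N : ℕ} (hN : 0 < N) {f g : ℤ → α}
    (hf : Function.Periodic f (2 * N)) (hg : Function.Periodic g (2 * N))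
    (h : ∀ j ∈ Idx N, f j = g j) : f = g := by
  funext j
  obtain ⟨i, hi, hfg⟩ := exists_mem_Idx_eq hN (f := fun j => (f j, g j))
    (fun j => Prod.ext (hf j) (hg j)) j
  obtain ⟨hfi, hgi⟩ := Prod.mk.inj hfg
  rw [hfi, hgi, h i hi]

lemma sum_Idx_neg {M : Type*} [AddCommMonoid M] {N : ℕ} {g : ℤ → M}
    (hg : Function.Periodic g (2 * N)) : ∑ j ∈ Idx N, g (-j) = ∑ j ∈ Idx N, g j := by
  -- `j ↦ -j` would leave `Idx N` at `j = N`; that point is fixed instead, as `g (-N) = g N`.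
  let σ : ℤ → ℤ := fun j => if j = N then N else -j
  have hσ : ∀ j ∈ Idx N, g (-j) = g (σ j) := fun j _ => by
    by_cases h : j = N
    · simp only [σ, h, if_true, ← hg (-N)]
      ring_nf
    · simp only [σ, h, if_false]
  refine Finset.sum_nbij' σ σ ?_ ?_ ?_ ?_ hσ <;> intro j hj <;>
    simp only [σ, Idx, Finset.mem_Icc] at hj ⊢ <;>
    split_ifs <;> omega

lemma ppC_inv {n : ℕ} (p : Fin (n + 1) → ℝ) (z : ℂ) : ppC p z⁻¹ = ppC p z := by
  simp only [ppC, _root_.inv_zpow', neg_neg, add_comm]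

section Algebra

variable {n : ℕ}

lemma ppC_add_smul (p d : Fin (n + 1) → ℝ) (t : ℝ) (z : ℂ) :
    ppC (p + t • d) z = ppC p z + t * ppC d z := by
  have hsum : ∑ k : Fin (n + 1), ((p + t • d) k : ℂ) * (z ^ (k.val : ℤ) + z ^ (-(k.val : ℤ)))
      = ∑ k : Fin (n + 1), (p k : ℂ) * (z ^ (k.val : ℤ) + z ^ (-(k.val : ℤ)))
        + t * ∑ k : Fin (n + 1), (d k : ℂ) * (z ^ (k.val : ℤ) + z ^ (-(k.val : ℤ))) := by
    rw [Finset.mul_sum, ← Finset.sum_add_distrib]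
    exact Finset.sum_congr rfl fun k _ => by
      simp only [Pi.add_apply, Pi.smul_apply, smul_eq_mul, Complex.ofReal_add, Complex.ofReal_mul]
      ring
  unfold ppC
  rw [hsum]
  simp only [Pi.add_apply, Pi.smul_apply, smul_eq_mul, Complex.ofReal_add, Complex.ofReal_mul]
  ring

lemma ppC_add_smul_re (p d : Fin (n + 1) → ℝ) (t : ℝ) (z : ℂ) :
    (ppC (p + t • d) z).re = (ppC p z).re + t * (ppC d z).re := by
  rw [ppC_add_smul, Complex.add_re, Complex.re_ofReal_mul]

lemma ppC_re_eq_pairCP {z : ℂ} (hz : ‖z‖ = 1) (q : Fin (n + 1) → ℝ) :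
    (ppC q z).re = pairCP (fun k => (z ^ (k.val : ℤ)).re) q := by
  have hconj (m : ℤ) : z ^ (-m) = (starRingEnd ℂ) (z ^ m) := by
    rw [_root_.zpow_neg, ← _root_.inv_zpow, Complex.inv_eq_conj hz, map_zpow₀]
  simp only [ppC, pairCP, hconj, Complex.sub_re, Complex.re_sum, Complex.re_ofReal_mul,
    Complex.add_re, Complex.conj_re, Complex.ofReal_re, Fin.val_zero, Nat.cast_zero, zpow_zero,
    Complex.one_re, Finset.mul_sum]
  congr 1
  · exact Finset.sum_congr rfl fun k _ => by ring
  · ring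

lemma pairCP_add_smul (c p d : Fin (n + 1) → ℝ) (t : ℝ) :
    pairCP c (p + t • d) = pairCP c p + t * pairCP c d := by
  have hsum : ∑ k, c k * (p + t • d) k = ∑ k, c k * p k + t * ∑ k, c k * d k := by
    rw [Finset.mul_sum, ← Finset.sum_add_distrib]
    exact Finset.sum_congr rfl fun k _ => by
      simp only [Pi.add_apply, Pi.smul_apply, smul_eq_mul]
      ring
  unfold pairCP
  rw [hsum]
  simp only [Pi.add_apply, Pi.smul_apply, smul_eq_mul]
  ring

lemma pairCP_smul_left (a : ℝ) (c q : Fin (n + 1) → ℝ) :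
    pairCP (a • c) q = a * pairCP c q := by
  have hsum : ∑ k, (a • c) k * q k = a * ∑ k, c k * q k := by
    rw [Finset.mul_sum]
    exact Finset.sum_congr rfl fun k _ => by simp only [Pi.smul_apply, smul_eq_mul]; ring
  unfold pairCP
  rw [hsum]
  simp only [Pi.smul_apply, smul_eq_mul]
  ring

lemma pairCP_single (c : Fin (n + 1) → ℝ) (k : Fin (n + 1)) :
    pairCP c (Pi.single k 1) = if k = 0 then c 0 else 2 * c k := by
  rcases eq_or_ne k 0 with rfl | hk
  · simp [pairCP, Pi.single_apply]
    ring
  · simp [pairCP, Pi.single_apply, hk, Ne.symm hk]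

lemma pairCP_left_injective {a b : Fin (n + 1) → ℝ} (h : ∀ d, pairCP a d = pairCP b d) :
    a = b := by
  funext k
  have hk := h (Pi.single k 1)
  simp only [pairCP_single] at hk
  split_ifs at hk with h0
  · rwa [h0]
  · linarith

end Algebra

section Circle

variable {N n : ℕ}

lemma ppC_zeta_neg (p : Fin (n + 1) → ℝ) (j : ℤ) :
    ppC p (zeta N (-j)) = ppC p (zeta N j) := by
  rw [zeta_neg, ppC_inv]

lemma memPplus.re_pos (hN : 0 < N) {p : Fin (n + 1) → ℝ} (hp : memPplus N p) (j : ℤ) :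
    0 < (ppC p (zeta N j)).re := by
  obtain ⟨i, hi, hji⟩ := exists_mem_Idx_eq hN (f := fun j => (ppC p (zeta N j)).re)
    (fun j => by simp only [zeta_periodic hN j]) j
  rw [hji]
  exact hp i hi

def ppRatio (N : ℕ) (P Q : Fin (n + 1) → ℝ) (j : ℤ) : ℝ :=
  (ppC P (zeta N j)).re / (ppC Q (zeta N j)).re

lemma ppRatio_periodic (hN : 0 < N) (P Q : Fin (n + 1) → ℝ) :
    Function.Periodic (ppRatio N P Q) (2 * N) := fun j => by
  simp only [ppRatio, zeta_periodic hN j]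

lemma ppRatio_neg (P Q : Fin (n + 1) → ℝ) (j : ℤ) : ppRatio N P Q (-j) = ppRatio N P Q j := by
  simp only [ppRatio, ppC_zeta_neg]

def momentsRe (N : ℕ) (Φ : ℤ → ℝ) (k : Fin (n + 1)) : ℝ :=
  ∑ j ∈ Idx N, Φ j * (zeta N j ^ (k.val : ℤ)).re

lemma sum_mul_ppC_re_eq_pairCP_momentsRe (Φ : ℤ → ℝ) (q : Fin (n + 1) → ℝ) :
    ∑ j ∈ Idx N, Φ j * (ppC q (zeta N j)).re = pairCP (momentsRe N Φ) q := by
  simp only [ppC_re_eq_pairCP (norm_zeta N _), pairCP, momentsRe, Finset.sum_mul,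
    Finset.mul_sum, mul_sub, Finset.sum_sub_distrib]
  rw [Finset.sum_comm]
  congr 1
  · exact Finset.sum_congr rfl fun k _ => Finset.sum_congr rfl fun j _ => by ring
  · exact Finset.sum_congr rfl fun j _ => by ring

lemma sum_zeta_zpow_mul_eq_ofReal {Φ : ℤ → ℝ} (hN : 0 < N) (hper : Function.Periodic Φ (2 * N))
    (hneg : ∀ j, Φ (-j) = Φ j) (m : ℤ) :
    ∑ j ∈ Idx N, zeta N j ^ m * (Φ j : ℂ) = ((∑ j ∈ Idx N, Φ j * (zeta N j ^ m).re : ℝ) : ℂ) := by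
  set h : ℤ → ℝ := fun j => Φ j * (zeta N j ^ m).im
  have hodd (j : ℤ) : h (-j) = -h j := by
    have hconj : zeta N (-j) ^ m = (starRingEnd ℂ) (zeta N j ^ m) := by
      rw [zeta_neg, _root_.inv_zpow,
        Complex.inv_eq_conj (by rw [norm_zpow, norm_zeta, _root_.one_zpow])]
    simp only [h, hneg, hconj, Complex.conj_im, mul_neg]
  have hh : Function.Periodic h (2 * N) := fun j => by simp only [h, hper j, zeta_periodic hN j]
  have him : ∑ j ∈ Idx N, h j = 0 := by
    have := sum_Idx_neg hh
    simp only [hodd, Finset.sum_neg_distrib] at this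
    linarith
  apply Complex.ext
  · simp [Complex.re_sum, mul_comm]
  · simpa [Complex.im_sum, mul_comm, h] using him

end Circle

section Moments

variable {N n : ℕ}

lemma moments_iff_momentsRe {Φ : ℤ → ℝ} (hN : 0 < N) (hper : Function.Periodic Φ (2 * N))
    (hneg : ∀ j, Φ (-j) = Φ j) (c : Fin (n + 1) → ℝ) :
    (∀ k : Fin (n + 1),
      (∑ j ∈ Idx N, zeta N j ^ (k.val : ℤ) * ((Φ j : ℝ) : ℂ)) / (2 * N) = (c k : ℂ)) ↔
    momentsRe N Φ = (2 * N : ℝ) • c := by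
  have h2N : (2 * N : ℂ) ≠ 0 := by exact_mod_cast (by positivity : 2 * N ≠ 0)
  simp only [sum_zeta_zpow_mul_eq_ofReal hN hper hneg, div_eq_iff h2N, funext_iff,
    momentsRe, Pi.smul_apply, smul_eq_mul]
  exact forall_congr' fun k => by rw [mul_comm]; exact_mod_cast Iff.rfl

lemma momentsRe_of_feasibleΦ (hN : 0 < N) {c : Fin (n + 1) → ℝ} {Φ : ℤ → ℝ}
    (hΦ : feasibleΦ N c Φ) : momentsRe N Φ = (2 * N : ℝ) • c :=
  (moments_iff_momentsRe hN hΦ.1 hΦ.2.1 c).mp hΦ.2.2.2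

lemma sum_mul_ppC_re_of_feasibleΦ (hN : 0 < N) {c : Fin (n + 1) → ℝ} {Φ : ℤ → ℝ}
    (hΦ : feasibleΦ N c Φ) (q : Fin (n + 1) → ℝ) :
    ∑ j ∈ Idx N, Φ j * (ppC q (zeta N j)).re = 2 * N * pairCP c q := by
  rw [sum_mul_ppC_re_eq_pairCP_momentsRe, momentsRe_of_feasibleΦ hN hΦ, pairCP_smul_left]

end Moments

section Stationarity

open Filter Topology

variable {N n : ℕ}

lemma eventually_memPplus_add_smul {Q : Fin (n + 1) → ℝ} (hQ : memPplus N Q)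
    (d : Fin (n + 1) → ℝ) : ∀ᶠ t in 𝓝 (0 : ℝ), memPplus N (Q + t • d) := by
  refine (Filter.eventually_all_finset _).mpr fun j hj => ?_
  simp only [ppC_add_smul_re]
  have hcont : Continuous fun t : ℝ => (ppC Q (zeta N j)).re + t * (ppC d (zeta N j)).re := by
    fun_prop
  exact continuousAt_const.eventually_lt hcont.continuousAt (by simpa using hQ j hj)

lemma hasDerivAt_Jdual_add_smul {Q : Fin (n + 1) → ℝ} (hQ : memPplus N Q)
    (c P d : Fin (n + 1) → ℝ) :
    HasDerivAt (fun t : ℝ => Jdual N c P (Q + t • d))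
      (pairCP c d - (∑ j ∈ Idx N, ppRatio N P Q j * (ppC d (zeta N j)).re) / (2 * N)) 0 := by
  simp only [Jdual, pairCP_add_smul, ppC_add_smul_re]
  have hpair : HasDerivAt (fun t : ℝ => pairCP c Q + t * pairCP c d) (pairCP c d) 0 := by
    simpa using ((hasDerivAt_id (0 : ℝ)).mul_const (pairCP c d)).const_add (pairCP c Q)
  have hlog : ∀ j ∈ Idx N, HasDerivAt (fun t : ℝ => (ppC P (zeta N j)).re *
      Real.log ((ppC Q (zeta N j)).re + t * (ppC d (zeta N j)).re))
      (ppRatio N P Q j * (ppC d (zeta N j)).re) 0 := fun j hj => by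
    have hlin : HasDerivAt (fun t : ℝ => (ppC Q (zeta N j)).re + t * (ppC d (zeta N j)).re)
        (ppC d (zeta N j)).re 0 := by
      simpa using ((hasDerivAt_id (0 : ℝ)).mul_const (ppC d (zeta N j)).re).const_add
        (ppC Q (zeta N j)).re
    refine ((hlin.log (by simpa using (hQ j hj).ne')).const_mul _).congr_deriv ?_
    simp only [ppRatio, zero_mul, add_zero]
    ring
  exact hpair.sub ((HasDerivAt.fun_sum hlog).div_const _)

lemma pairCP_eq_of_forall_Jdual_le {c P Q : Fin (n + 1) → ℝ} (hQ : memPplus N Q)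
    (hmin : ∀ q, memPplus N q → Jdual N c P Q ≤ Jdual N c P q) (d : Fin (n + 1) → ℝ) :
    pairCP c d = (∑ j ∈ Idx N, ppRatio N P Q j * (ppC d (zeta N j)).re) / (2 * N) := by
  have hloc : IsLocalMin (fun t : ℝ => Jdual N c P (Q + t • d)) 0 := by
    filter_upwards [eventually_memPplus_add_smul hQ d] with t ht
    simpa using hmin _ ht
  linarith [hloc.hasDerivAt_eq_zero (hasDerivAt_Jdual_add_smul hQ c P d)]

lemma momentsRe_ppRatio (hN : 0 < N) {c P Q : Fin (n + 1) → ℝ} (hQ : memPplus N Q)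
    (hmin : ∀ q, memPplus N q → Jdual N c P Q ≤ Jdual N c P q) :
    momentsRe N (ppRatio N P Q) = (2 * N : ℝ) • c := by
  refine pairCP_left_injective fun d => ?_
  rw [← sum_mul_ppC_re_eq_pairCP_momentsRe, pairCP_smul_left,
    pairCP_eq_of_forall_Jdual_le hQ hmin d, mul_div_cancel₀ _ (by positivity)]

lemma feasibleΦ_ppRatio (hN : 0 < N) {c P Q : Fin (n + 1) → ℝ} (hP : memPplus N P)
    (hQ : memPplus N Q) (hmin : ∀ q, memPplus N q → Jdual N c P Q ≤ Jdual N c P q) :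
    feasibleΦ N c (ppRatio N P Q) :=
  ⟨ppRatio_periodic hN P Q, ppRatio_neg P Q, fun j => div_pos (hP.re_pos hN j) (hQ.re_pos hN j),
    (moments_iff_momentsRe hN (ppRatio_periodic hN P Q) (ppRatio_neg P Q) c).mpr
      (momentsRe_ppRatio hN hQ hmin)⟩

end Stationarity

section Gibbs

lemma mul_log_le_mul_log_div_add {R S φ : ℝ} (hR : 0 < R) (hS : 0 < S) (hφ : 0 < φ) :
    R * Real.log φ ≤ R * Real.log (R / S) + (φ * S - R) := by
  have h := Real.log_le_sub_one_of_pos (by positivity : 0 < φ * S / R)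
  rw [Real.log_div (by positivity) hR.ne', Real.log_mul hφ.ne' hS.ne'] at h
  have hmul : R * (φ * S / R) = φ * S := by field_simp
  rw [Real.log_div hR.ne' hS.ne']
  nlinarith [mul_le_mul_of_nonneg_left h hR.le]

lemma mul_log_lt_mul_log_div_add {R S φ : ℝ} (hR : 0 < R) (hS : 0 < S) (hφ : 0 < φ)
    (hne : φ ≠ R / S) : R * Real.log φ < R * Real.log (R / S) + (φ * S - R) := by
  have hne1 : φ * S / R ≠ 1 := by
    rwa [ne_eq, div_eq_one_iff_eq hR.ne', ← eq_div_iff hS.ne']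
  have h := Real.log_lt_sub_one_of_pos (by positivity : 0 < φ * S / R) hne1
  rw [Real.log_div (by positivity) hR.ne', Real.log_mul hφ.ne' hS.ne'] at h
  have hmul : R * (φ * S / R) = φ * S := by field_simp
  rw [Real.log_div hR.ne' hS.ne']
  nlinarith [mul_lt_mul_of_pos_left h hR]

variable {ι : Type*} {s : Finset ι} {R S Φ : ι → ℝ}

lemma sum_mul_log_le_sum_mul_log_div (hR : ∀ i ∈ s, 0 < R i) (hS : ∀ i ∈ s, 0 < S i)
    (hΦ : ∀ i ∈ s, 0 < Φ i) (hsum : ∑ i ∈ s, Φ i * S i = ∑ i ∈ s, R i) :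
    ∑ i ∈ s, R i * Real.log (Φ i) ≤ ∑ i ∈ s, R i * Real.log (R i / S i) := by
  calc ∑ i ∈ s, R i * Real.log (Φ i)
      ≤ ∑ i ∈ s, (R i * Real.log (R i / S i) + (Φ i * S i - R i)) :=
        Finset.sum_le_sum fun i hi => mul_log_le_mul_log_div_add (hR i hi) (hS i hi) (hΦ i hi)
    _ = ∑ i ∈ s, R i * Real.log (R i / S i) := by
        rw [Finset.sum_add_distrib, Finset.sum_sub_distrib, hsum, sub_self, add_zero]

lemma eq_div_of_sum_mul_log_eq (hR : ∀ i ∈ s, 0 < R i) (hS : ∀ i ∈ s, 0 < S i)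
    (hΦ : ∀ i ∈ s, 0 < Φ i) (hsum : ∑ i ∈ s, Φ i * S i = ∑ i ∈ s, R i)
    (heq : ∑ i ∈ s, R i * Real.log (Φ i) = ∑ i ∈ s, R i * Real.log (R i / S i)) :
    ∀ i ∈ s, Φ i = R i / S i := by
  by_contra! ⟨i, hi, hne⟩
  have hlt : ∑ i ∈ s, R i * Real.log (Φ i)
      < ∑ i ∈ s, (R i * Real.log (R i / S i) + (Φ i * S i - R i)) :=
    Finset.sum_lt_sum (fun i hi => mul_log_le_mul_log_div_add (hR i hi) (hS i hi) (hΦ i hi))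
      ⟨i, hi, mul_log_lt_mul_log_div_add (hR i hi) (hS i hi) (hΦ i hi) hne⟩
  rw [Finset.sum_add_distrib, Finset.sum_sub_distrib, hsum, sub_self, add_zero] at hlt
  exact hlt.ne heq

end Gibbs

theorem stmt2_general (N n : ℕ) (hNn : n < N)
    (c P Qhat : Fin (n + 1) → ℝ) (hP : memPplus N P)
    (hQmem : memPplus N Qhat)
    (hQmin : ∀ q, memPplus N q → Jdual N c P Qhat ≤ Jdual N c P q) :
    feasibleΦ N c (fun j => (ppC P (zeta N j)).re / (ppC Qhat (zeta N j)).re) ∧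
    ∀ Φ : ℤ → ℝ, feasibleΦ N c Φ →
      entropyP N P Φ ≤
        entropyP N P (fun j => (ppC P (zeta N j)).re / (ppC Qhat (zeta N j)).re) ∧
      (entropyP N P Φ =
          entropyP N P (fun j => (ppC P (zeta N j)).re / (ppC Qhat (zeta N j)).re) →
        Φ = fun j => (ppC P (zeta N j)).re / (ppC Qhat (zeta N j)).re) := by
  have hN : 0 < N := by omega
  have hfeas : feasibleΦ N c (ppRatio N P Qhat) := feasibleΦ_ppRatio hN hP hQmem hQmin
  refine ⟨hfeas, fun Φ hΦ => ?_⟩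
  have hsum : ∑ j ∈ Idx N, Φ j * (ppC Qhat (zeta N j)).re = ∑ j ∈ Idx N, (ppC P (zeta N j)).re := by
    rw [sum_mul_ppC_re_of_feasibleΦ hN hΦ, ← sum_mul_ppC_re_of_feasibleΦ hN hfeas]
    exact Finset.sum_congr rfl fun j hj => div_mul_cancel₀ _ (hQmem j hj).ne'
  have hpos := fun j (_ : j ∈ Idx N) => hΦ.2.2.1 j
  refine ⟨div_le_div_of_nonneg_right (sum_mul_log_le_sum_mul_log_div hP hQmem hpos hsum)
    (by positivity), fun heq => ?_⟩
  have hsum_log := (div_left_inj' (by positivity : (2 * N : ℝ) ≠ 0)).mp heq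
  exact Function.Periodic.eq_of_eqOn_Idx hN hΦ.1 (ppRatio_periodic hN P Qhat)
    (eq_div_of_sum_mul_log_eq hP hQmem hpos hsum hsum_log)

/-- among all positive symmetric functions on `𝕋_{2N}` matching the
moments `c`, the generalized entropy `𝕀_P` is maximized, uniquely, by `Φ = P/Q̂`, where
`Q̂` is the minimizer of the dual functional `𝕁_P` over `𝔓₊(N)`. -/
theorem stmt2 (N n : ℕ) (hn : 1 ≤ n) (hNn : n < N)
    (c P Qhat : Fin (n + 1) → ℝ) (hc : memCplus N c) (hP : memPplus N P)
    (hQmem : memPplus N Qhat)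
    (hQmin : ∀ q, memPplus N q → Jdual N c P Qhat ≤ Jdual N c P q) :
    feasibleΦ N c (fun j => (ppC P (zeta N j)).re / (ppC Qhat (zeta N j)).re) ∧
    ∀ Φ : ℤ → ℝ, feasibleΦ N c Φ →
      entropyP N P Φ ≤
        entropyP N P (fun j => (ppC P (zeta N j)).re / (ppC Qhat (zeta N j)).re) ∧
      (entropyP N P Φ =
          entropyP N P (fun j => (ppC P (zeta N j)).re / (ppC Qhat (zeta N j)).re) →
        Φ = fun j => (ppC P (zeta N j)).re / (ppC Qhat (zeta N j)).re) :=
  stmt2_general N n hNn c P Qhat hP hQmem hQmin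

end
end
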